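/- arXiv:1804.05785 — 3 statements merged into one kernel-verified Lean document; each statement's English description precedes it below -/
import Mathlib

section
/- Fix e ∈ {1,…,T}, an integer l with −e ≤ l ≤ T−e−1, an integer s with 0 ≤ s < e, and a nonempty set C ⊆ {c ∈ ℕ : e+l < c ≤ T and s < c} with P(E ∈ C) > 0. Assume parallel trends (PT) and no anticipation (NA). Then the sample DID estimator δ̂^{s,C}_{e,l}(n) converges almost surely to CATT(e,l) as n → ∞. (Consistency part of Proposition 3.) -/
open MeasureTheory Filter

noncomputable section

/-- Conditional expectation `E[Z | A] := E[Z·1_A] / P(A)` given an event `A`. -/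
def cexp {Ω : Type*} [MeasurableSpace Ω] (μ : Measure Ω) (Z : Ω → ℝ) (A : Set Ω) : ℝ :=
  (∫ ω in A, Z ω ∂μ) / (μ A).toReal

/-- Observed outcome `Y_t := Y∞_t + Σ_{e=1}^{T} (Yᵉ_t − Y∞_t)·1{E = e}`. -/
def obsY {Ω : Type*} (T : ℕ) (E : Ω → ℕ) (Ye : ℕ → ℕ → Ω → ℝ) (Yinf : ℕ → Ω → ℝ)
    (t : ℕ) (ω : Ω) : ℝ :=
  Yinf t ω + ∑ e ∈ Finset.Icc 1 T, (Ye e t ω - Yinf t ω) * (if E ω = e then 1 else 0)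

/-- Cohort-specific average treatment effect on the treated,
`CATT(e,l) := E[Yᵉ_{e+l} − Y∞_{e+l} | E = e]`. -/
def CATT {Ω : Type*} [MeasurableSpace Ω] (μ : Measure Ω) (E : Ω → ℕ)
    (Ye : ℕ → ℕ → Ω → ℝ) (Yinf : ℕ → Ω → ℝ) (e : ℕ) (l : ℤ) : ℝ :=
  cexp μ (fun ω => Ye e ((e : ℤ) + l).toNat ω - Yinf ((e : ℤ) + l).toNat ω) {ω | E ω = e}

/-- Parallel trends in baseline outcome. -/
def PT {Ω : Type*} [MeasurableSpace Ω] (μ : Measure Ω) (T : ℕ) (E : Ω → ℕ)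
    (Yinf : ℕ → Ω → ℝ) : Prop :=
  ∀ e ∈ Finset.Icc 1 T, ∀ s ≤ T, ∀ t ≤ T,
    cexp μ (fun ω => Yinf t ω - Yinf s ω) {ω | E ω = e}
      = ∫ ω, (Yinf t ω - Yinf s ω) ∂μ

/-- No anticipatory behavior. -/
def NA {Ω : Type*} [MeasurableSpace Ω] (μ : Measure Ω) (T : ℕ)
    (Ye : ℕ → ℕ → Ω → ℝ) (Yinf : ℕ → Ω → ℝ) : Prop :=
  ∀ e ∈ Finset.Icc 1 T, ∀ t < e, Ye e t =ᵐ[μ] Yinf t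

/-- Number of indices `i < n` whose event time lies in `A`. -/
def sampleCount {Ω' : Type*} (Eseq : ℕ → Ω' → ℕ) (A : Finset ℕ) (n : ℕ) (ω' : Ω') : ℕ :=
  ((Finset.range n).filter (fun i => Eseq i ω' ∈ A)).card

/-- The sample difference-in-differences estimator `δ̂^{s,C}_{e,l}(n)`
(Lean's convention `x/0 = 0` handles vanishing denominators). -/
def sampleDID {Ω' : Type*} (Eseq : ℕ → Ω' → ℕ) (Yseq : ℕ → ℕ → Ω' → ℝ)
    (e : ℕ) (l : ℤ) (s : ℕ) (C : Finset ℕ) (n : ℕ) (ω' : Ω') : ℝ :=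
  (∑ i ∈ (Finset.range n).filter (fun i => Eseq i ω' = e),
      (Yseq i ((e : ℤ) + l).toNat ω' - Yseq i s ω'))
      / (sampleCount Eseq {e} n ω' : ℝ)
    - (∑ i ∈ (Finset.range n).filter (fun i => Eseq i ω' ∈ C),
        (Yseq i ((e : ℤ) + l).toNat ω' - Yseq i s ω'))
      / (sampleCount Eseq C n ω' : ℝ)

/-- The sequence `((E_i, (Y_{i,t})_t))_i` is i.i.d. with each term distributed as
`(E, (Y_t)_t)`. -/
def IIDSample {Ω Ω' : Type*} [MeasurableSpace Ω] [MeasurableSpace Ω']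
    (μ : Measure Ω) (μ' : Measure Ω') (T : ℕ) (E : Ω → ℕ)
    (Ye : ℕ → ℕ → Ω → ℝ) (Yinf : ℕ → Ω → ℝ)
    (Eseq : ℕ → Ω' → ℕ) (Yseq : ℕ → ℕ → Ω' → ℝ) : Prop :=
  ProbabilityTheory.iIndepFun
      (fun i ω' => ((Eseq i ω', fun t : Fin (T + 1) => Yseq i t ω') :
        ℕ × (Fin (T + 1) → ℝ))) μ'
    ∧ ∀ i : ℕ,
        Measure.map (fun ω' => ((Eseq i ω', fun t : Fin (T + 1) => Yseq i t ω') :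
          ℕ × (Fin (T + 1) → ℝ))) μ'
        = Measure.map (fun ω => ((E ω, fun t : Fin (T + 1) => obsY T E Ye Yinf t ω) :
          ℕ × (Fin (T + 1) → ℝ))) μ

/-!
By the strong law of large numbers for the i.i.d. vectors `(E_i, Y_i)`, numerator and
denominator of a cohort average both converge, so the sample mean of `Y_{e+l} − Y_s` over
a cohort set `A` converges almost surely to the population mean `E[Y_{e+l} − Y_s | E ∈ A]`.
By no anticipation, on `{E = c}` the observed difference is `Yᶜ_{e+l} − Y∞_s`, and even
`Y∞_{e+l} − Y∞_s` for a not-yet-treated cohort `c > e + l, s`. Parallel trends makes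
`E[Y∞_{e+l} − Y∞_s | E = c]` the same number for every cohort, so the control mean over `C`
is exactly this common trend, which cancels the trend part of the treated mean and leaves
`CATT(e,l)`.
-/

open ProbabilityTheory

theorem tendsto_div_of_tendsto_div_natCast {u v : ℕ → ℝ} {a b : ℝ} (hb : b ≠ 0)
    (hu : Tendsto (fun n => u n / n) atTop (nhds a))
    (hv : Tendsto (fun n => v n / n) atTop (nhds b)) :
    Tendsto (fun n => u n / v n) atTop (nhds (a / b)) := by
  refine (hu.div hv hb).congr' ?_
  filter_upwards [eventually_ne_atTop 0] with n hn
  have hn' : (n : ℝ) ≠ 0 := Nat.cast_ne_zero.mpr hn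
  exact div_div_div_cancel_right₀ hn' (u n) (v n)

section SampleMeans

variable {Ω' α : Type*}

def sampleCondMean (W : ℕ → Ω' → α) (p : α → Prop) [DecidablePred p] (g : α → ℝ)
    (n : ℕ) (ω' : Ω') : ℝ :=
  (∑ i ∈ (Finset.range n).filter (fun i => p (W i ω')), g (W i ω'))
    / ((Finset.range n).filter (fun i => p (W i ω'))).card

variable [MeasurableSpace Ω'] [MeasurableSpace α]

theorem ae_tendsto_average_of_iIndepFun {μ' : Measure Ω'} [IsProbabilityMeasure μ']
    {ν : Measure α} [IsProbabilityMeasure ν] {W : ℕ → Ω' → α} (hindep : iIndepFun W μ')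
    (hlaw : ∀ i, Measure.map (W i) μ' = ν) {f : α → ℝ} (hf : Measurable f)
    (hint : Integrable f ν) :
    ∀ᵐ ω' ∂μ', Tendsto (fun n => (∑ i ∈ Finset.range n, f (W i ω')) / n) atTop
      (nhds (∫ a, f a ∂ν)) := by
  have hW : ∀ i, AEMeasurable (W i) μ' := fun i => by
    by_contra h
    exact IsProbabilityMeasure.ne_zero ν (hlaw i ▸ Measure.map_of_not_aemeasurable h)
  have hident : ∀ i, IdentDistrib (W i) (W 0) μ' μ' :=
    fun i => ⟨hW i, hW 0, (hlaw i).trans (hlaw 0).symm⟩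
  have hint0 : Integrable (f ∘ W 0) μ' :=
    (integrable_map_measure hf.aestronglyMeasurable (hW 0)).mp (hlaw 0 ▸ hint)
  have h := strong_law_ae_real (fun i ω' => f (W i ω')) hint0
    (fun i j hij => (hindep.indepFun hij).comp hf hf) (fun i => (hident i).comp hf)
  rwa [← integral_map (hW 0) hf.aestronglyMeasurable, hlaw 0] at h

theorem ae_tendsto_sampleCondMean {μ' : Measure Ω'} [IsProbabilityMeasure μ']
    {ν : Measure α} [IsProbabilityMeasure ν] {W : ℕ → Ω' → α} (hindep : iIndepFun W μ')
    (hlaw : ∀ i, Measure.map (W i) μ' = ν) {p : α → Prop} [DecidablePred p]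
    (hp : MeasurableSet {a | p a}) (hpos : ν {a | p a} ≠ 0) {g : α → ℝ} (hg : Measurable g)
    (hint : Integrable g ν) :
    ∀ᵐ ω' ∂μ', Tendsto (fun n => sampleCondMean W p g n ω') atTop
      (nhds (cexp ν g {a | p a})) := by
  have hsum := ae_tendsto_average_of_iIndepFun hindep hlaw (hg.indicator hp)
    (hint.indicator hp)
  have hcount := ae_tendsto_average_of_iIndepFun hindep hlaw (f := {a | p a}.indicator 1)
    (measurable_one.indicator hp) ((integrable_const (1 : ℝ)).indicator hp)
  filter_upwards [hsum, hcount] with ω' hsum hcount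
  rw [integral_indicator hp] at hsum
  rw [integral_indicator_one hp] at hcount
  have hne : ν.real {a | p a} ≠ 0 := (measureReal_ne_zero_iff).mpr hpos
  refine (tendsto_div_of_tendsto_div_natCast hne hsum hcount).congr fun n => ?_
  simp only [sampleCondMean, Finset.sum_filter, Finset.natCast_card_filter, Set.indicator_apply,
    Set.mem_ofPred_eq, Pi.one_apply]

end SampleMeans

section ConditionalMean

variable {Ω : Type*} [MeasurableSpace Ω] {μ : Measure Ω}

theorem cexp_map {α : Type*} [MeasurableSpace α] {Z : Ω → α} (hZ : AEMeasurable Z μ)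
    {S : Set α} (hS : MeasurableSet S) {g : α → ℝ} (hg : Measurable g) :
    cexp (μ.map Z) g S = cexp μ (g ∘ Z) (Z ⁻¹' S) := by
  rw [cexp, cexp, setIntegral_map hS hg.aestronglyMeasurable hZ,
    Measure.map_apply_of_aemeasurable hZ hS]
  rfl

theorem cexp_congr_ae {Z Z' : Ω → ℝ} {A : Set Ω} (hA : MeasurableSet A)
    (h : ∀ᵐ ω ∂μ, ω ∈ A → Z ω = Z' ω) : cexp μ Z A = cexp μ Z' A := by
  rw [cexp, cexp, setIntegral_congr_ae hA h]

theorem cexp_add {Z Z' : Ω → ℝ} {A : Set Ω} (hZ : IntegrableOn Z A μ)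
    (hZ' : IntegrableOn Z' A μ) :
    cexp μ (fun ω => Z ω + Z' ω) A = cexp μ Z A + cexp μ Z' A := by
  rw [cexp, cexp, cexp, integral_add hZ hZ', add_div]

theorem setIntegral_eq_cexp_mul [IsFiniteMeasure μ] (Z : Ω → ℝ) (A : Set Ω) :
    ∫ ω in A, Z ω ∂μ = cexp μ Z A * μ.real A := by
  rcases eq_or_ne (μ A) 0 with h | h
  · simp [Measure.restrict_eq_zero.mpr h, measureReal_def, h]
  · rw [cexp, measureReal_def,
      div_mul_cancel₀ _ (ENNReal.toReal_ne_zero.mpr ⟨h, measure_ne_top μ A⟩)]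

theorem cexp_setOf_mem_finset_of_forall_eq {β : Type*} [MeasurableSpace β]
    [MeasurableSingletonClass β] [IsFiniteMeasure μ] {E : Ω → β} (hE : Measurable E)
    {Z : Ω → ℝ} (hZ : Integrable Z μ) {C : Finset β} (hC : μ {ω | E ω ∈ C} ≠ 0) {m : ℝ}
    (h : ∀ c ∈ C, cexp μ Z {ω | E ω = c} = m) : cexp μ Z {ω | E ω ∈ C} = m := by
  have hunion : {ω | E ω ∈ C} = ⋃ c ∈ C, {ω | E ω = c} := by ext; simp
  have hmeas : ∀ c ∈ C, MeasurableSet {ω | E ω = c} :=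
    fun c _ => hE (measurableSet_singleton c)
  have hdisj : (C : Set β).PairwiseDisjoint fun c => {ω | E ω = c} :=
    fun a _ b _ hab => Set.disjoint_left.mpr fun ω ha hb => hab (ha.symm.trans hb)
  rw [cexp, ← measureReal_def, div_eq_iff ((measureReal_ne_zero_iff).mpr hC), hunion,
    integral_biUnion_finset C hmeas hdisj (fun c _ => hZ.integrableOn),
    measureReal_biUnion_finset hdisj hmeas, Finset.mul_sum]
  exact Finset.sum_congr rfl fun c hc => by rw [setIntegral_eq_cexp_mul, h c hc]

end ConditionalMean

section Population

variable {Ω : Type*} {T : ℕ} {E : Ω → ℕ} {Ye : ℕ → ℕ → Ω → ℝ} {Yinf : ℕ → Ω → ℝ}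

theorem obsY_of_eq {c : ℕ} (hc : c ∈ Finset.Icc 1 T) {ω : Ω} (hω : E ω = c) (t : ℕ) :
    obsY T E Ye Yinf t ω = Ye c t ω := by
  rw [obsY, Finset.sum_eq_single c (fun b _ hbc => by simp [hω, Ne.symm hbc])
    (absurd hc)]
  simp [hω]

variable [MeasurableSpace Ω] {μ : Measure Ω}

theorem integrable_obsY (hE : Measurable E) {t : ℕ}
    (hYe : ∀ c ∈ Finset.Icc 1 T, Integrable (Ye c t) μ) (hYinf : Integrable (Yinf t) μ) :
    Integrable (obsY T E Ye Yinf t) μ := by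
  refine hYinf.add (integrable_finsetSum _ fun c hc => ?_)
  refine (((hYe c hc).sub hYinf).indicator (hE (measurableSet_singleton c))).congr
    (ae_of_all _ fun ω => ?_)
  by_cases h : E ω = c <;> simp [h]

theorem cexp_obsY_sub_of_lt (hE : Measurable E) (hPT : PT μ T E Yinf) (hNA : NA μ T Ye Yinf)
    {c s t : ℕ} (hc : c ∈ Finset.Icc 1 T) (hsT : s ≤ T) (htT : t ≤ T) (hs : s < c)
    (ht : t < c) :
    cexp μ (fun ω => obsY T E Ye Yinf t ω - obsY T E Ye Yinf s ω) {ω | E ω = c}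
      = ∫ ω, (Yinf t ω - Yinf s ω) ∂μ := by
  rw [← hPT c hc s hsT t htT]
  refine cexp_congr_ae (hE (measurableSet_singleton c)) ?_
  filter_upwards [hNA c hc t ht, hNA c hc s hs] with ω hYt hYs hω
  rw [obsY_of_eq hc hω, obsY_of_eq hc hω, hYt, hYs]

theorem cexp_obsY_sub_treated (hE : Measurable E) (hPT : PT μ T E Yinf)
    (hNA : NA μ T Ye Yinf) {e s t : ℕ} (he : e ∈ Finset.Icc 1 T) (hsT : s ≤ T) (htT : t ≤ T)
    (hs : s < e) (hYe : Integrable (Ye e t) μ) (hYinft : Integrable (Yinf t) μ)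
    (hYinfs : Integrable (Yinf s) μ) :
    cexp μ (fun ω => obsY T E Ye Yinf t ω - obsY T E Ye Yinf s ω) {ω | E ω = e}
      = cexp μ (fun ω => Ye e t ω - Yinf t ω) {ω | E ω = e}
        + ∫ ω, (Yinf t ω - Yinf s ω) ∂μ := by
  rw [← hPT e he s hsT t htT,
    ← cexp_add (Z := fun ω => Ye e t ω - Yinf t ω) (Z' := fun ω => Yinf t ω - Yinf s ω)
      (hYe.sub hYinft).integrableOn (hYinft.sub hYinfs).integrableOn]
  refine cexp_congr_ae (hE (measurableSet_singleton e)) ?_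
  filter_upwards [hNA e he s hs] with ω hYs hω
  rw [obsY_of_eq he hω, obsY_of_eq he hω, hYs]
  ring

theorem cexp_obsY_sub_treated_sub_control [IsFiniteMeasure μ] (hE : Measurable E)
    (hPT : PT μ T E Yinf) (hNA : NA μ T Ye Yinf)
    (hYe : ∀ c ∈ Finset.Icc 1 T, ∀ t ≤ T, Integrable (Ye c t) μ)
    (hYinf : ∀ t ≤ T, Integrable (Yinf t) μ) {e s t : ℕ} (he : e ∈ Finset.Icc 1 T)
    (htT : t ≤ T) (hs : s < e) {C : Finset ℕ} (hC : ∀ c ∈ C, t < c ∧ c ≤ T ∧ s < c)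
    (hCpos : μ {ω | E ω ∈ C} ≠ 0) :
    cexp μ (fun ω => obsY T E Ye Yinf t ω - obsY T E Ye Yinf s ω) {ω | E ω = e}
      - cexp μ (fun ω => obsY T E Ye Yinf t ω - obsY T E Ye Yinf s ω) {ω | E ω ∈ C}
      = cexp μ (fun ω => Ye e t ω - Yinf t ω) {ω | E ω = e} := by
  have hsT : s ≤ T := (hs.trans_le (Finset.mem_Icc.mp he).2).le
  have hobs : ∀ u ≤ T, Integrable (obsY T E Ye Yinf u) μ :=
    fun u hu => integrable_obsY hE (fun c hc => hYe c hc u hu) (hYinf u hu)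
  have hcontrol := cexp_setOf_mem_finset_of_forall_eq hE
    (Z := fun ω => obsY T E Ye Yinf t ω - obsY T E Ye Yinf s ω) ((hobs t htT).sub (hobs s hsT))
    hCpos fun c hc => by
      obtain ⟨htc, hcT, hsc⟩ := hC c hc
      exact cexp_obsY_sub_of_lt hE hPT hNA (Finset.mem_Icc.mpr ⟨by omega, hcT⟩) hsT htT hsc htc
  rw [cexp_obsY_sub_treated hE hPT hNA he hsT htT hs (hYe e he t htT) (hYinf t htT)
    (hYinf s hsT), hcontrol, add_sub_cancel_right]

end Population

theorem IIDSample.ae_tendsto_cohortMean {Ω Ω' : Type*} [MeasurableSpace Ω]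
    [MeasurableSpace Ω'] {μ : Measure Ω} [IsProbabilityMeasure μ] {μ' : Measure Ω'}
    [IsProbabilityMeasure μ'] {T : ℕ} {E : Ω → ℕ} {Ye : ℕ → ℕ → Ω → ℝ} {Yinf : ℕ → Ω → ℝ}
    {Eseq : ℕ → Ω' → ℕ} {Yseq : ℕ → ℕ → Ω' → ℝ} (hiid : IIDSample μ μ' T E Ye Yinf Eseq Yseq)
    (hE : Measurable E) (hobs : ∀ u ≤ T, Integrable (obsY T E Ye Yinf u) μ)
    (A : Finset ℕ) (hA : μ {ω | E ω ∈ A} ≠ 0) (t s : Fin (T + 1)) :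
    ∀ᵐ ω' ∂μ', Tendsto (fun n =>
      (∑ i ∈ (Finset.range n).filter (fun i => Eseq i ω' ∈ A), (Yseq i t ω' - Yseq i s ω'))
        / ((Finset.range n).filter (fun i => Eseq i ω' ∈ A)).card) atTop
      (nhds (cexp μ (fun ω => obsY T E Ye Yinf t ω - obsY T E Ye Yinf s ω) {ω | E ω ∈ A})) := by
  obtain ⟨hindep, hlaw⟩ := hiid
  set Z := fun ω => ((E ω, fun u : Fin (T + 1) => obsY T E Ye Yinf u ω) :
    ℕ × (Fin (T + 1) → ℝ))
  let g := fun a : ℕ × (Fin (T + 1) → ℝ) => a.2 t - a.2 s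
  have hZ : AEMeasurable Z μ := hE.aemeasurable.prodMk
    (aemeasurable_pi_lambda _ fun u => (hobs u u.is_le).aemeasurable)
  have hg : Measurable g := by fun_prop
  have hgint : Integrable g (μ.map Z) := (integrable_map_measure hg.aestronglyMeasurable hZ).mpr
    ((hobs t t.is_le).sub (hobs s s.is_le))
  have hS : MeasurableSet {a : ℕ × (Fin (T + 1) → ℝ) | a.1 ∈ A} := measurable_fst A.measurableSet
  have := Measure.isProbabilityMeasure_map hZ
  have h := ae_tendsto_sampleCondMean hindep hlaw hS
    ((Measure.map_apply_of_aemeasurable hZ hS).trans_ne hA) hg hgint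
  rwa [cexp_map hZ hS hg] at h

theorem sampleDID_consistent_general
    {Ω Ω' : Type*} [MeasurableSpace Ω] [MeasurableSpace Ω']
    (μ : Measure Ω) [IsProbabilityMeasure μ]
    (μ' : Measure Ω') [IsProbabilityMeasure μ']
    (T : ℕ)
    (E : Ω → ℕ) (hE : Measurable E)
    (hpos : ∀ e ∈ Finset.Icc 1 T, 0 < μ {ω | E ω = e})
    (Ye : ℕ → ℕ → Ω → ℝ) (Yinf : ℕ → Ω → ℝ)
    (hL2e : ∀ e ∈ Finset.Icc 1 T, ∀ t ≤ T, MemLp (Ye e t) 2 μ)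
    (hL2inf : ∀ t ≤ T, MemLp (Yinf t) 2 μ)
    (hPT : PT μ T E Yinf) (hNA : NA μ T Ye Yinf)
    (Eseq : ℕ → Ω' → ℕ) (Yseq : ℕ → ℕ → Ω' → ℝ)
    (hiid : IIDSample μ μ' T E Ye Yinf Eseq Yseq)
    (e : ℕ) (he : e ∈ Finset.Icc 1 T)
    (l : ℤ) (hl2 : l ≤ (T : ℤ) - e - 1)
    (s : ℕ) (hs : s < e)
    (C : Finset ℕ)
    (hCsub : ∀ c ∈ C, (e : ℤ) + l < (c : ℤ) ∧ c ≤ T ∧ s < c)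
    (hCpos : 0 < μ {ω | E ω ∈ C}) :
    ∀ᵐ ω' ∂μ', Tendsto (fun n => sampleDID Eseq Yseq e l s C n ω') atTop
      (nhds (CATT μ E Ye Yinf e l)) := by
  have heT := (Finset.mem_Icc.mp he).2
  have hYe := fun c hc t ht => (hL2e c hc t ht).integrable one_le_two
  have hYinf := fun t ht => (hL2inf t ht).integrable one_le_two
  have hobs : ∀ u ≤ T, Integrable (obsY T E Ye Yinf u) μ :=
    fun u hu => integrable_obsY hE (fun c hc => hYe c hc u hu) (hYinf u hu)
  set t := ((e : ℤ) + l).toNat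
  have htT : t < T + 1 := by omega
  have hsT : s < T + 1 := by omega
  have htreated := hiid.ae_tendsto_cohortMean hE hobs {e}
    (by simpa using (hpos e he).ne') ⟨t, htT⟩ ⟨s, hsT⟩
  have hcontrol := hiid.ae_tendsto_cohortMean hE hobs C hCpos.ne' ⟨t, htT⟩ ⟨s, hsT⟩
  filter_upwards [htreated, hcontrol] with ω' htreated hcontrol
  rw [CATT, ← cexp_obsY_sub_treated_sub_control hE hPT hNA hYe hYinf he (t := t) (by omega) hs
    (fun c hc => by have := hCsub c hc; omega) hCpos.ne']
  simpa [sampleDID, sampleCount, t] using htreated.sub hcontrol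

/-- Proposition 3 (consistency): the sample DID estimator converges almost surely
to `CATT(e,l)`. -/
theorem sampleDID_consistent
    {Ω Ω' : Type*} [MeasurableSpace Ω] [MeasurableSpace Ω']
    (μ : Measure Ω) [IsProbabilityMeasure μ]
    (μ' : Measure Ω') [IsProbabilityMeasure μ']
    (T : ℕ) (hT : 1 ≤ T)
    (E : Ω → ℕ) (hE : Measurable E)
    (hsupp : μ {ω | 1 ≤ E ω ∧ E ω ≤ T} = 1)
    (hpos : ∀ e ∈ Finset.Icc 1 T, 0 < μ {ω | E ω = e})
    (Ye : ℕ → ℕ → Ω → ℝ) (Yinf : ℕ → Ω → ℝ)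
    (hL2e : ∀ e ∈ Finset.Icc 1 T, ∀ t ≤ T, MemLp (Ye e t) 2 μ)
    (hL2inf : ∀ t ≤ T, MemLp (Yinf t) 2 μ)
    (hPT : PT μ T E Yinf) (hNA : NA μ T Ye Yinf)
    (Eseq : ℕ → Ω' → ℕ) (Yseq : ℕ → ℕ → Ω' → ℝ)
    (hiid : IIDSample μ μ' T E Ye Yinf Eseq Yseq)
    (e : ℕ) (he : e ∈ Finset.Icc 1 T)
    (l : ℤ) (hl1 : -(e : ℤ) ≤ l) (hl2 : l ≤ (T : ℤ) - e - 1)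
    (s : ℕ) (hs : s < e)
    (C : Finset ℕ) (hCne : C.Nonempty)
    (hCsub : ∀ c ∈ C, (e : ℤ) + l < (c : ℤ) ∧ c ≤ T ∧ s < c)
    (hCpos : 0 < μ {ω | E ω ∈ C}) :
    ∀ᵐ ω' ∂μ', Tendsto (fun n => sampleDID Eseq Yseq e l s C n ω') atTop
      (nhds (CATT μ E Ye Yinf e l)) :=
  sampleDID_consistent_general μ μ' T E hE hpos Ye Yinf hL2e hL2inf hPT hNA Eseq Yseq hiid e he l
    hl2 s hs C hCsub hCpos

end
end

section
/- Assume parallel trends (PT) and no anticipation (NA), and assume V ≠ 0. Then the static fixed-effects estimand γ := (Σ_{t=0}^{T} E[Y_t·D̈_t]) / V satisfies γ = Σ_{e=1}^{T} Σ_{l=0}^{T−e} (w(e,l)/V)·CATT(e,l). (Proposition 1: the probability limit of the static two-way fixed-effects coefficient is a weighted average of the cohort-specific average treatment effects on the treated.) -/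
/-!
On the cohort `{E = e}` the demeaned treatment `D̈_t` is a constant `g(t, e)`. These constants sum
to zero over `t` (two-way demeaning) and, weighted by `P(E = e)`, over `e` (because `E[D̈_t] = 0`),
so they annihilate every additive array `P(E = e) (a_e + b_t)`. The numerator is
`Σ_t Σ_e g(t, e) E[Yᵉ_t 1{E = e}]`; split `Yᵉ_t = (Yᵉ_t − Y∞_t) + Y∞_t`. By parallel trends the
baseline part `E[Y∞_t 1{E = e}]` is such an additive array, so it drops out. By no anticipation
the effect part vanishes for `t < e`, and for `t = e + l` it is `P(E = e) CATT(e, l)`, while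
`P(E = e) g(e + l, e) = w(e, l)`.
-/
open MeasureTheory Filter

noncomputable section

/-- Two-way demeaning of a panel of random variables. -/
def ddot {Ω : Type*} [MeasurableSpace Ω] (μ : Measure Ω) (T : ℕ) (X : ℕ → Ω → ℝ)
    (t : ℕ) (ω : Ω) : ℝ :=
  X t ω - (∫ ω', X t ω' ∂μ)
    - (1 / ((T : ℝ) + 1)) * ∑ s ∈ Finset.range (T + 1), X s ω
    + (1 / ((T : ℝ) + 1)) * ∑ s ∈ Finset.range (T + 1), ∫ ω', X s ω' ∂μ

/-- Treatment status `D_t := 1{E ≤ t}`. -/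
def Dstat {Ω : Type*} (E : Ω → ℕ) (t : ℕ) (ω : Ω) : ℝ :=
  if E ω ≤ t then 1 else 0

/-- Denominator of the static fixed-effects estimand, `V := Σ_{t=0}^{T} E[D_t·D̈_t]`. -/
def Vstat {Ω : Type*} [MeasurableSpace Ω] (μ : Measure Ω) (T : ℕ) (E : Ω → ℕ) : ℝ :=
  ∑ t ∈ Finset.range (T + 1), ∫ ω, Dstat E t ω * ddot μ T (Dstat E) t ω ∂μ

/-- Unnormalized weight
`w(e,l) := P(E=e)·(1 − P(E ≤ e+l) − (T−e+1)/(T+1) + (1/(T+1))·Σ_{s=0}^{T} P(E ≤ s))`. -/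
def wstat {Ω : Type*} [MeasurableSpace Ω] (μ : Measure Ω) (T : ℕ) (E : Ω → ℕ)
    (e l : ℕ) : ℝ :=
  (μ {ω | E ω = e}).toReal *
    (1 - (μ {ω | E ω ≤ e + l}).toReal - ((T : ℝ) - (e : ℝ) + 1) / ((T : ℝ) + 1)
      + (1 / ((T : ℝ) + 1)) * ∑ s ∈ Finset.range (T + 1), (μ {ω | E ω ≤ s}).toReal)

section Fibers

variable {Ω ι : Type*} [MeasurableSpace Ω] [MeasurableSpace ι] [MeasurableSingletonClass ι]
  {μ : Measure Ω}

theorem setIntegral_eq_measureReal_mul_cexp [IsFiniteMeasure μ] (Z : Ω → ℝ) (A : Set Ω) :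
    ∫ ω in A, Z ω ∂μ = μ.real A * cexp μ Z A := by
  rcases eq_or_ne (μ A) 0 with hA | hA
  · simp [setIntegral_measure_zero Z hA, measureReal_def, hA]
  · rw [cexp, ← measureReal_def, mul_div_cancel₀]
    exact (measureReal_ne_zero_iff (measure_ne_top μ A)).2 hA

theorem integral_eq_sum_setIntegral_fiber {E : Ω → ι} (hE : Measurable E) {s : Finset ι}
    (hs : ∀ᵐ ω ∂μ, E ω ∈ s) {f : Ω → ℝ} (hf : ∀ e ∈ s, IntegrableOn f {ω | E ω = e} μ) :
    ∫ ω, f ω ∂μ = ∑ e ∈ s, ∫ ω in {ω | E ω = e}, f ω ∂μ := by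
  have hcover : (⋃ e ∈ s, {ω | E ω = e}) = E ⁻¹' s := by ext; simp
  rw [← integral_biUnion_finset (s := fun e => {ω | E ω = e}) s
    (fun e _ => hE (measurableSet_singleton e))
    ((Set.pairwiseDisjoint_fiber E s).subset subset_rfl) hf, hcover,
    Measure.restrict_eq_self_of_ae_mem (s := E ⁻¹' s) hs]

theorem integral_mul_comp_eq_sum {E : Ω → ι} (hE : Measurable E) {s : Finset ι}
    (hs : ∀ᵐ ω ∂μ, E ω ∈ s) {Z : Ω → ℝ} (hZ : ∀ e ∈ s, IntegrableOn Z {ω | E ω = e} μ)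
    (φ : ι → ℝ) :
    ∫ ω, Z ω * φ (E ω) ∂μ = ∑ e ∈ s, φ e * ∫ ω in {ω | E ω = e}, Z ω ∂μ := by
  have hmeas : ∀ e, MeasurableSet {ω | E ω = e} := fun e => hE (measurableSet_singleton e)
  have hfiber : ∀ e, Set.EqOn (fun ω => Z ω * φ (E ω)) (fun ω => φ e * Z ω) {ω | E ω = e} :=
    fun e ω (hω : E ω = e) => by simp only [hω, mul_comm]
  rw [integral_eq_sum_setIntegral_fiber hE hs fun e he =>
    IntegrableOn.congr_fun ((hZ e he).const_mul (φ e)) (hfiber e).symm (hmeas e)]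
  refine Finset.sum_congr rfl fun e _ => ?_
  rw [setIntegral_congr_fun (hmeas e) (hfiber e), integral_const_mul]

theorem integral_comp_eq_sum [IsFiniteMeasure μ] {E : Ω → ι} (hE : Measurable E)
    {s : Finset ι} (hs : ∀ᵐ ω ∂μ, E ω ∈ s) (φ : ι → ℝ) :
    ∫ ω, φ (E ω) ∂μ = ∑ e ∈ s, μ.real {ω | E ω = e} * φ e := by
  simpa [mul_comm] using
    integral_mul_comp_eq_sum (Z := fun _ => 1) hE hs (fun _ _ => integrableOn_const) φ

end Fibers

theorem sum_sum_mul_add_mul_eq_zero {ι κ : Type*} (S : Finset ι) (C : Finset κ)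
    (g : ι → κ → ℝ) (p a : κ → ℝ) (b : ι → ℝ)
    (hcol : ∀ e ∈ C, ∑ t ∈ S, g t e = 0) (hrow : ∀ t ∈ S, ∑ e ∈ C, p e * g t e = 0) :
    ∑ t ∈ S, ∑ e ∈ C, p e * (a e + b t) * g t e = 0 := by
  have hcohort : ∑ t ∈ S, ∑ e ∈ C, p e * a e * g t e = 0 := by
    rw [Finset.sum_comm]
    exact Finset.sum_eq_zero fun e he => by rw [← Finset.mul_sum, hcol e he, mul_zero]
  have htime : ∑ t ∈ S, ∑ e ∈ C, p e * b t * g t e = 0 := by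
    refine Finset.sum_eq_zero fun t ht => ?_
    calc ∑ e ∈ C, p e * b t * g t e = b t * ∑ e ∈ C, p e * g t e := by
          rw [Finset.mul_sum]; exact Finset.sum_congr rfl fun e _ => by ring
      _ = 0 := by rw [hrow t ht, mul_zero]
  simp only [mul_add, add_mul, Finset.sum_add_distrib, hcohort, htime, add_zero]

theorem Finset.sum_range_eq_sum_range_add_of_eq_zero {M : Type*} [AddCommMonoid M] (f : ℕ → M)
    {e n : ℕ} (hen : e ≤ n) (hf : ∀ t < e, f t = 0) :
    ∑ t ∈ Finset.range n, f t = ∑ l ∈ Finset.range (n - e), f (e + l) := by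
  obtain ⟨k, rfl⟩ := Nat.exists_eq_add_of_le hen
  rw [Finset.sum_range_add, Finset.sum_eq_zero fun t ht => hf t (Finset.mem_range.1 ht),
    zero_add, Nat.add_sub_cancel_left]

theorem sum_range_ite_le {T e : ℕ} (he : e ≤ T) :
    ∑ s ∈ Finset.range (T + 1), (if e ≤ s then (1 : ℝ) else 0) = (T : ℝ) - e + 1 := by
  rw [Finset.sum_boole, Finset.range_eq_Ico, Finset.Ico_filter_le, max_eq_right (Nat.zero_le e),
    Nat.card_Ico, Nat.cast_sub (by omega)]
  push_cast
  ring

theorem Dstat_eq_indicator {Ω : Type*} (E : Ω → ℕ) (t : ℕ) :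
    Dstat E t = {ω | E ω ≤ t}.indicator 1 := by
  ext ω
  simp [Dstat, Set.indicator_apply]

section Panel

variable {Ω : Type*} [MeasurableSpace Ω] {μ : Measure Ω} {T : ℕ}

theorem integral_ddot_eq_zero [IsProbabilityMeasure μ] {X : ℕ → Ω → ℝ}
    (hX : ∀ s ≤ T, Integrable (X s) μ) {t : ℕ} (ht : t ≤ T) :
    ∫ ω, ddot μ T X t ω ∂μ = 0 := by
  have hX' : ∀ s ∈ Finset.range (T + 1), Integrable (X s) μ :=
    fun s hs => hX s (Finset.mem_range_succ_iff.1 hs)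
  unfold ddot
  rw [integral_add, integral_sub, integral_sub, integral_const_mul, integral_finsetSum _ hX']
  · simp
  all_goals fun_prop

variable {E : Ω → ℕ}

def cohortDdot (μ : Measure Ω) (T : ℕ) (E : Ω → ℕ) (t e : ℕ) : ℝ :=
  (if e ≤ t then 1 else 0) - μ.real {ω | E ω ≤ t}
    - (1 / ((T : ℝ) + 1)) * ∑ s ∈ Finset.range (T + 1), (if e ≤ s then 1 else 0)
    + (1 / ((T : ℝ) + 1)) * ∑ s ∈ Finset.range (T + 1), μ.real {ω | E ω ≤ s}

theorem integral_Dstat (hE : Measurable E) (t : ℕ) :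
    ∫ ω, Dstat E t ω ∂μ = μ.real {ω | E ω ≤ t} := by
  rw [Dstat_eq_indicator, integral_indicator_one (s := {ω | E ω ≤ t}) (hE measurableSet_Iic)]

theorem integrable_Dstat [IsFiniteMeasure μ] (hE : Measurable E) (t : ℕ) :
    Integrable (Dstat E t) μ := by
  rw [Dstat_eq_indicator]
  exact (integrable_const 1).indicator (hE measurableSet_Iic)

theorem ddot_Dstat_eq_cohortDdot (hE : Measurable E) (t : ℕ) (ω : Ω) :
    ddot μ T (Dstat E) t ω = cohortDdot μ T E t (E ω) := by
  simp only [ddot, cohortDdot, integral_Dstat hE]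
  rfl

theorem sum_cohortDdot_eq_zero (e : ℕ) :
    ∑ t ∈ Finset.range (T + 1), cohortDdot μ T E t e = 0 := by
  simp only [cohortDdot, Finset.sum_add_distrib, Finset.sum_sub_distrib, Finset.sum_const,
    Finset.card_range, nsmul_eq_mul]
  field_simp
  push_cast
  ring

theorem sum_measureReal_mul_cohortDdot_eq_zero [IsProbabilityMeasure μ] (hE : Measurable E)
    (hae : ∀ᵐ ω ∂μ, E ω ∈ Finset.Icc 1 T) {t : ℕ} (ht : t ≤ T) :
    ∑ e ∈ Finset.Icc 1 T, μ.real {ω | E ω = e} * cohortDdot μ T E t e = 0 := by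
  rw [← integral_comp_eq_sum (μ := μ) hE hae,
    ← integral_ddot_eq_zero (X := Dstat E) (fun s _ => integrable_Dstat (μ := μ) hE s) ht]
  simp only [ddot_Dstat_eq_cohortDdot hE]

theorem wstat_eq_measureReal_mul_cohortDdot {e : ℕ} (he : e ≤ T) (l : ℕ) :
    wstat μ T E e l = μ.real {ω | E ω = e} * cohortDdot μ T E (e + l) e := by
  simp only [wstat, cohortDdot, sum_range_ite_le he, if_pos (Nat.le_add_right e l),
    measureReal_def]
  ring

variable {Ye : ℕ → ℕ → Ω → ℝ} {Yinf : ℕ → Ω → ℝ}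

omit [MeasurableSpace Ω] in
theorem obsY_eq_of_mem {e : ℕ} (he : e ∈ Finset.Icc 1 T) {ω : Ω} (hω : E ω = e) (t : ℕ) :
    obsY T E Ye Yinf t ω = Ye e t ω := by
  rw [obsY, Finset.sum_eq_single_of_mem e he fun b _ hb => by simp [hω, Ne.symm hb]]
  simp [hω]

theorem integral_obsY_mul_ddot (hE : Measurable E) (hae : ∀ᵐ ω ∂μ, E ω ∈ Finset.Icc 1 T)
    {t : ℕ} (hYe : ∀ e ∈ Finset.Icc 1 T, Integrable (Ye e t) μ) :
    ∫ ω, obsY T E Ye Yinf t ω * ddot μ T (Dstat E) t ω ∂μ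
      = ∑ e ∈ Finset.Icc 1 T, cohortDdot μ T E t e * ∫ ω in {ω | E ω = e}, Ye e t ω ∂μ := by
  have hmeas : ∀ e, MeasurableSet {ω | E ω = e} := fun e => hE (measurableSet_singleton e)
  have hfiber : ∀ e ∈ Finset.Icc 1 T,
      Set.EqOn (Ye e t) (fun ω => obsY T E Ye Yinf t ω) {ω | E ω = e} :=
    fun e he ω hω => (obsY_eq_of_mem he hω t).symm
  simp only [ddot_Dstat_eq_cohortDdot hE]
  rw [integral_mul_comp_eq_sum hE hae fun e he =>
    (hYe e he).integrableOn.congr_fun (hfiber e he) (hmeas e)]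
  exact Finset.sum_congr rfl fun e he =>
    congrArg _ (setIntegral_congr_fun (hmeas e) (hfiber e he)).symm

theorem setIntegral_Yinf_eq [IsFiniteMeasure μ] (hPT : PT μ T E Yinf)
    (hYinf : ∀ t ≤ T, Integrable (Yinf t) μ) {e : ℕ} (he : e ∈ Finset.Icc 1 T)
    {t : ℕ} (ht : t ≤ T) :
    ∫ ω in {ω | E ω = e}, Yinf t ω ∂μ = μ.real {ω | E ω = e} *
      (cexp μ (Yinf 0) {ω | E ω = e} + ∫ ω, (Yinf t ω - Yinf 0 ω) ∂μ) := by
  calc ∫ ω in {ω | E ω = e}, Yinf t ω ∂μ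
      = ∫ ω in {ω | E ω = e}, (Yinf t ω - Yinf 0 ω) ∂μ + ∫ ω in {ω | E ω = e}, Yinf 0 ω ∂μ := by
        rw [integral_sub (hYinf t ht).integrableOn (hYinf 0 T.zero_le).integrableOn,
          sub_add_cancel]
    _ = _ := by
        rw [setIntegral_eq_measureReal_mul_cexp (fun ω => Yinf t ω - Yinf 0 ω),
          setIntegral_eq_measureReal_mul_cexp (Yinf 0), hPT e he 0 T.zero_le t ht]
        ring

theorem sum_cohortDdot_mul_setIntegral_Yinf_eq_zero [IsProbabilityMeasure μ]
    (hE : Measurable E) (hae : ∀ᵐ ω ∂μ, E ω ∈ Finset.Icc 1 T) (hPT : PT μ T E Yinf)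
    (hYinf : ∀ t ≤ T, Integrable (Yinf t) μ) :
    ∑ t ∈ Finset.range (T + 1), ∑ e ∈ Finset.Icc 1 T,
      cohortDdot μ T E t e * ∫ ω in {ω | E ω = e}, Yinf t ω ∂μ = 0 := by
  rw [← sum_sum_mul_add_mul_eq_zero (Finset.range (T + 1)) (Finset.Icc 1 T) (cohortDdot μ T E)
    (fun e => μ.real {ω | E ω = e}) (fun e => cexp μ (Yinf 0) {ω | E ω = e})
    (fun t => ∫ ω, (Yinf t ω - Yinf 0 ω) ∂μ) (fun e _ => sum_cohortDdot_eq_zero e)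
    (fun t ht => sum_measureReal_mul_cohortDdot_eq_zero hE hae (Finset.mem_range_succ_iff.1 ht))]
  refine Finset.sum_congr rfl fun t ht => Finset.sum_congr rfl fun e he => ?_
  rw [setIntegral_Yinf_eq hPT hYinf he (Finset.mem_range_succ_iff.1 ht), mul_comm]

theorem setIntegral_effect_eq_zero_of_lt (hNA : NA μ T Ye Yinf) {e : ℕ}
    (he : e ∈ Finset.Icc 1 T) {t : ℕ} (ht : t < e) :
    ∫ ω in {ω | E ω = e}, (Ye e t ω - Yinf t ω) ∂μ = 0 :=
  integral_eq_zero_of_ae <| ae_restrict_of_ae <|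
    (hNA e he t ht).mono fun _ h => sub_eq_zero.2 h

theorem setIntegral_effect_eq_measureReal_mul_CATT [IsFiniteMeasure μ] (e l : ℕ) :
    ∫ ω in {ω | E ω = e}, (Ye e (e + l) ω - Yinf (e + l) ω) ∂μ
      = μ.real {ω | E ω = e} * CATT μ E Ye Yinf e l := by
  have hidx : ((e : ℤ) + (l : ℤ)).toNat = e + l := by omega
  rw [CATT, hidx, ← setIntegral_eq_measureReal_mul_cexp]

theorem sum_cohortDdot_mul_setIntegral_effect [IsFiniteMeasure μ] (hNA : NA μ T Ye Yinf) :
    ∑ t ∈ Finset.range (T + 1), ∑ e ∈ Finset.Icc 1 T,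
      cohortDdot μ T E t e * ∫ ω in {ω | E ω = e}, (Ye e t ω - Yinf t ω) ∂μ
      = ∑ e ∈ Finset.Icc 1 T, ∑ l ∈ Finset.range (T - e + 1),
          wstat μ T E e l * CATT μ E Ye Yinf e l := by
  rw [Finset.sum_comm]
  refine Finset.sum_congr rfl fun e he => ?_
  have heT : e ≤ T := (Finset.mem_Icc.1 he).2
  rw [Finset.sum_range_eq_sum_range_add_of_eq_zero _ (by omega : e ≤ T + 1)
      fun t ht => by rw [setIntegral_effect_eq_zero_of_lt hNA he ht, mul_zero],
    show T + 1 - e = T - e + 1 by omega]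
  refine Finset.sum_congr rfl fun l _ => ?_
  rw [setIntegral_effect_eq_measureReal_mul_CATT, wstat_eq_measureReal_mul_cohortDdot heT]
  ring

theorem sum_integral_obsY_mul_ddot [IsProbabilityMeasure μ] (hE : Measurable E)
    (hae : ∀ᵐ ω ∂μ, E ω ∈ Finset.Icc 1 T) (hPT : PT μ T E Yinf) (hNA : NA μ T Ye Yinf)
    (hYe : ∀ e ∈ Finset.Icc 1 T, ∀ t ≤ T, Integrable (Ye e t) μ)
    (hYinf : ∀ t ≤ T, Integrable (Yinf t) μ) :
    ∑ t ∈ Finset.range (T + 1), ∫ ω, obsY T E Ye Yinf t ω * ddot μ T (Dstat E) t ω ∂μ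
      = ∑ e ∈ Finset.Icc 1 T, ∑ l ∈ Finset.range (T - e + 1),
          wstat μ T E e l * CATT μ E Ye Yinf e l := by
  have hsplit : ∀ t ∈ Finset.range (T + 1),
      ∫ ω, obsY T E Ye Yinf t ω * ddot μ T (Dstat E) t ω ∂μ
        = ∑ e ∈ Finset.Icc 1 T,
            cohortDdot μ T E t e * ∫ ω in {ω | E ω = e}, (Ye e t ω - Yinf t ω) ∂μ
          + ∑ e ∈ Finset.Icc 1 T, cohortDdot μ T E t e * ∫ ω in {ω | E ω = e}, Yinf t ω ∂μ := by
    intro t ht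
    have htT : t ≤ T := Finset.mem_range_succ_iff.1 ht
    rw [integral_obsY_mul_ddot hE hae fun e he => hYe e he t htT, ← Finset.sum_add_distrib]
    refine Finset.sum_congr rfl fun e he => ?_
    rw [← mul_add, integral_sub (hYe e he t htT).integrableOn (hYinf t htT).integrableOn,
      sub_add_cancel]
  rw [Finset.sum_congr rfl hsplit, Finset.sum_add_distrib,
    sum_cohortDdot_mul_setIntegral_effect hNA,
    sum_cohortDdot_mul_setIntegral_Yinf_eq_zero hE hae hPT hYinf, add_zero]

end Panel

theorem static_fe_estimand_decomposition_general
    {Ω : Type*} [MeasurableSpace Ω] (μ : Measure Ω) [IsProbabilityMeasure μ]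
    (T : ℕ)
    (E : Ω → ℕ) (hE : Measurable E)
    (hsupp : μ {ω | 1 ≤ E ω ∧ E ω ≤ T} = 1)
    (Ye : ℕ → ℕ → Ω → ℝ) (Yinf : ℕ → Ω → ℝ)
    (hL2e : ∀ e ∈ Finset.Icc 1 T, ∀ t ≤ T, MemLp (Ye e t) 2 μ)
    (hL2inf : ∀ t ≤ T, MemLp (Yinf t) 2 μ)
    (hPT : PT μ T E Yinf) (hNA : NA μ T Ye Yinf) :
    (∑ t ∈ Finset.range (T + 1),
        ∫ ω, obsY T E Ye Yinf t ω * ddot μ T (Dstat E) t ω ∂μ) / Vstat μ T E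
      = ∑ e ∈ Finset.Icc 1 T, ∑ l ∈ Finset.range (T - e + 1),
          (wstat μ T E e l / Vstat μ T E) * CATT μ E Ye Yinf e (l : ℤ) := by
  have hae : ∀ᵐ ω ∂μ, E ω ∈ Finset.Icc 1 T := by
    refine (ae_iff_measure_eq (hE (Finset.Icc 1 T).measurableSet).nullMeasurableSet).2 ?_
    simpa only [Finset.coe_Icc, Set.mem_Icc, measure_univ] using hsupp
  have hYe : ∀ e ∈ Finset.Icc 1 T, ∀ t ≤ T, Integrable (Ye e t) μ :=
    fun e he t ht => (hL2e e he t ht).integrable one_le_two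
  have hYinf : ∀ t ≤ T, Integrable (Yinf t) μ := fun t ht => (hL2inf t ht).integrable one_le_two
  rw [sum_integral_obsY_mul_ddot hE hae hPT hNA hYe hYinf]
  simp only [Finset.sum_div, div_mul_eq_mul_div]

/-- Proposition 1: under parallel trends and no anticipation, the static two-way
fixed-effects estimand `γ = (Σ_t E[Y_t·D̈_t])/V` is the weighted average
`Σ_{e=1}^{T} Σ_{l=0}^{T−e} (w(e,l)/V)·CATT(e,l)`. -/
theorem static_fe_estimand_decomposition
    {Ω : Type*} [MeasurableSpace Ω] (μ : Measure Ω) [IsProbabilityMeasure μ]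
    (T : ℕ) (hT : 1 ≤ T)
    (E : Ω → ℕ) (hE : Measurable E)
    (hsupp : μ {ω | 1 ≤ E ω ∧ E ω ≤ T} = 1)
    (hpos : ∀ e ∈ Finset.Icc 1 T, 0 < μ {ω | E ω = e})
    (Ye : ℕ → ℕ → Ω → ℝ) (Yinf : ℕ → Ω → ℝ)
    (hL2e : ∀ e ∈ Finset.Icc 1 T, ∀ t ≤ T, MemLp (Ye e t) 2 μ)
    (hL2inf : ∀ t ≤ T, MemLp (Yinf t) 2 μ)
    (hPT : PT μ T E Yinf) (hNA : NA μ T Ye Yinf)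
    (hV : Vstat μ T E ≠ 0) :
    (∑ t ∈ Finset.range (T + 1),
        ∫ ω, obsY T E Ye Yinf t ω * ddot μ T (Dstat E) t ω ∂μ) / Vstat μ T E
      = ∑ e ∈ Finset.Icc 1 T, ∑ l ∈ Finset.range (T - e + 1),
          (wstat μ T E e l / Vstat μ T E) * CATT μ E Ye Yinf e (l : ℤ) :=
  static_fe_estimand_decomposition_general μ T E hE hsupp Ye Yinf hL2e hL2inf hPT hNA

end
end

section
/- Assume parallel trends (PT) and no anticipation (NA). Then the numerator of the dynamic fixed-effects estimand decomposes over cohorts and post-treatment lags: Σ_{t=0}^{T} E[D̈_t·Y_t] = Σ_{e=1}^{T} Σ_{l'=0}^{T−e} CATT(e,l')·c(e,l') as vectors in ℝ^L. (Numerator decomposition in the proof of Proposition 2: under PT and NA the dynamic two-way fixed-effects system depends on the outcome data only through the CATTs.) -/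
open MeasureTheory Filter

noncomputable section

/-- Relative-time indicator `Dˡ_t := 1{t − E = l}`. -/
def Drel {Ω : Type*} (E : Ω → ℕ) (l : ℤ) (t : ℕ) (ω : Ω) : ℝ :=
  if (t : ℤ) - (E ω : ℤ) = l then 1 else 0

/-- Two-way demeaned relative-time indicator `D̈ˡ_t`. -/
def ddotRel {Ω : Type*} [MeasurableSpace Ω] (μ : Measure Ω) (T : ℕ) (E : Ω → ℕ)
    (l : ℤ) (t : ℕ) (ω : Ω) : ℝ :=
  Drel E l t ω - (∫ ω', Drel E l t ω' ∂μ)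
    - (1 / ((T : ℝ) + 1)) * ∑ s ∈ Finset.range (T + 1), Drel E l s ω
    + (1 / ((T : ℝ) + 1)) * ∑ s ∈ Finset.range (T + 1), ∫ ω', Drel E l s ω' ∂μ

/-- The matrix `V_D := Σ_{t=0}^{T} E[D̈_t·D̈_tᵀ]`, indexed by the lag set `L`. -/
def VD {Ω : Type*} [MeasurableSpace Ω] (μ : Measure Ω) (T : ℕ) (E : Ω → ℕ)
    (L : Finset ℤ) : Matrix {x // x ∈ L} {x // x ∈ L} ℝ :=
  fun l l' => ∑ t ∈ Finset.range (T + 1),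
    ∫ ω, ddotRel μ T E l.1 t ω * ddotRel μ T E l'.1 t ω ∂μ

/-- The vector `c(e,l') := Σ_{t=0}^{T} E[D̈_t·1{E = e}·D^{l'}_t] ∈ ℝ^L`. -/
def cvec {Ω : Type*} [MeasurableSpace Ω] (μ : Measure Ω) (T : ℕ) (E : Ω → ℕ)
    (L : Finset ℤ) (e : ℕ) (l' : ℤ) : {x // x ∈ L} → ℝ :=
  fun l => ∑ t ∈ Finset.range (T + 1),
    ∫ ω, ddotRel μ T E l.1 t ω * ((if E ω = e then (1 : ℝ) else 0) * Drel E l' t ω) ∂μ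

/-- The numerator vector `Σ_{t=0}^{T} E[D̈_t·Y_t] ∈ ℝ^L`. -/
def bvec {Ω : Type*} [MeasurableSpace Ω] (μ : Measure Ω) (T : ℕ) (E : Ω → ℕ)
    (Ye : ℕ → ℕ → Ω → ℝ) (Yinf : ℕ → Ω → ℝ) (L : Finset ℤ) : {x // x ∈ L} → ℝ :=
  fun l => ∑ t ∈ Finset.range (T + 1),
    ∫ ω, ddotRel μ T E l.1 t ω * obsY T E Ye Yinf t ω ∂μ

/-- The dynamic fixed-effects estimand vector `μ := V_D⁻¹·Σ_t E[D̈_t·Y_t] ∈ ℝ^L`. -/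
def muFE {Ω : Type*} [MeasurableSpace Ω] (μ : Measure Ω) (T : ℕ) (E : Ω → ℕ)
    (Ye : ℕ → ℕ → Ω → ℝ) (Yinf : ℕ → Ω → ℝ) (L : Finset ℤ) : {x // x ∈ L} → ℝ :=
  Matrix.mulVec (VD μ T E L)⁻¹ (bvec μ T E Ye Yinf L)

/-- The weight `ω(l; e, l') := (V_D⁻¹·c(e,l'))_l`. -/
def omegaFE {Ω : Type*} [MeasurableSpace Ω] (μ : Measure Ω) (T : ℕ) (E : Ω → ℕ)
    (L : Finset ℤ) (l : {x // x ∈ L}) (e : ℕ) (l' : ℤ) : ℝ :=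
  Matrix.mulVec (VD μ T E L)⁻¹ (cvec μ T E L e l') l

/-!
`D̈ˡ_t` depends on `ω` only through the cohort `E ω`, so every expectation in the numerator splits
over cohorts: `E[D̈ˡ_t Y_t] = Σ_e D̈ˡ_t(e) · E[Yᵉ_t; E = e]`. Write `E[Yᵉ_t; E = e]` as a
treatment effect plus `E[Y∞_t; E = e]`. By parallel trends the baseline term is
`E[Y∞_0; E = e] + P(E = e)·(E[Y∞_t] − E[Y∞_0])`, and it is annihilated by the two-way
demeaning: the first summand because `Σ_t D̈ˡ_t(e) = 0`, the second because
`Σ_e P(E = e) D̈ˡ_t(e) = E[D̈ˡ_t] = 0`.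
By no anticipation only the treatment effects at `t = e + l'` with `l' ≥ 0` survive, and these are
`CATT(e,l')·P(E = e)`, while `c(e,l')_l = D̈ˡ_{e+l'}(e)·P(E = e)`.
-/

open Finset

section General

variable {Ω α : Type*} [MeasurableSpace Ω] {μ : Measure Ω}

lemma measurableSet_fiber [MeasurableSpace α] [MeasurableSingletonClass α] {X : Ω → α}
    (hX : Measurable X) (a : α) : MeasurableSet {ω | X ω = a} :=
  hX (measurableSet_singleton a)

lemma integral_eq_sum_setIntegral_fiber_s8 [MeasurableSpace α]
    [MeasurableSingletonClass α] {X : Ω → α} (hX : Measurable X) {S : Finset α}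
    (hS : ∀ᵐ ω ∂μ, X ω ∈ S) {f : Ω → ℝ} (hf : ∀ a ∈ S, IntegrableOn f {ω | X ω = a} μ) :
    ∫ ω, f ω ∂μ = ∑ a ∈ S, ∫ ω in {ω | X ω = a}, f ω ∂μ := by
  have hdisj : Set.Pairwise (S : Set α) (Function.onFun Disjoint fun a => {ω | X ω = a}) :=
    fun a _ b _ hab => Set.disjoint_left.mpr fun ω ha hb => hab (ha.symm.trans hb)
  have hcover : (⋃ a ∈ S, {ω | X ω = a}) = X ⁻¹' S := by ext; simp
  rw [← integral_biUnion_finset S (fun a _ => measurableSet_fiber hX a) hdisj hf, hcover,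
    setIntegral_eq_integral_of_ae_compl_eq_zero]
  filter_upwards [hS] with ω hω hω' using absurd hω hω'

-- Also for null `A`, where `cexp μ Z A` is the junk value `0 / 0 = 0`.
lemma cexp_mul_measureReal [IsFiniteMeasure μ] (Z : Ω → ℝ) (A : Set Ω) :
    cexp μ Z A * μ.real A = ∫ ω in A, Z ω ∂μ := by
  by_cases hA : μ.real A = 0
  · have hnull : μ A = 0 := (measureReal_eq_zero_iff (measure_ne_top μ A)).mp hA
    rw [hA, mul_zero, Measure.restrict_eq_zero.mpr hnull, integral_zero_measure]
  · exact div_mul_cancel₀ _ hA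

end General

section Demeaning

variable {Ω : Type*} [MeasurableSpace Ω] {μ : Measure Ω} {T : ℕ} {E : Ω → ℕ}

def ddotCohort (μ : Measure Ω) (T : ℕ) (E : Ω → ℕ) (l : ℤ) (t e : ℕ) : ℝ :=
  (if (t : ℤ) - (e : ℤ) = l then 1 else 0) - (∫ ω', Drel E l t ω' ∂μ)
    - (1 / ((T : ℝ) + 1)) * ∑ s ∈ range (T + 1), (if (s : ℤ) - (e : ℤ) = l then 1 else 0)
    + (1 / ((T : ℝ) + 1)) * ∑ s ∈ range (T + 1), ∫ ω', Drel E l s ω' ∂μ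

lemma ddotRel_eq_ddotCohort (l : ℤ) (t : ℕ) (ω : Ω) :
    ddotRel μ T E l t ω = ddotCohort μ T E l t (E ω) := rfl

lemma sum_ddotCohort_eq_zero (l : ℤ) (e : ℕ) :
    ∑ t ∈ range (T + 1), ddotCohort μ T E l t e = 0 := by
  have hT : ((T : ℝ) + 1) * (1 / ((T : ℝ) + 1)) = 1 := mul_one_div_cancel (by positivity)
  simp only [ddotCohort, sum_add_distrib, sum_sub_distrib, sum_const, card_range, nsmul_eq_mul,
    Nat.cast_add_one, ← mul_assoc, hT, one_mul]
  ring

lemma integrable_Drel [IsFiniteMeasure μ] (hE : Measurable E) (l : ℤ) (s : ℕ) :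
    Integrable (Drel E l s) μ := by
  refine Integrable.of_bound
    ((measurable_from_nat (f := fun n : ℕ => if (s : ℤ) - n = l then (1 : ℝ) else 0)).comp
      hE).aestronglyMeasurable 1 (ae_of_all _ fun ω => ?_)
  unfold Drel
  split_ifs <;> simp

lemma integrable_ddotRel [IsFiniteMeasure μ] (hE : Measurable E) (l : ℤ) (t : ℕ) :
    Integrable (ddotRel μ T E l t) μ :=
  (((integrable_Drel hE l t).sub (integrable_const _)).sub
    ((integrable_finsetSum _ fun s _ => integrable_Drel hE l s).const_mul _)).add
    (integrable_const _)

lemma integral_ddotRel_eq_zero [IsProbabilityMeasure μ] (hE : Measurable E) (l : ℤ) (t : ℕ) :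
    ∫ ω, ddotRel μ T E l t ω ∂μ = 0 := by
  have hD := integrable_Drel (μ := μ) hE l
  have hcentered : Integrable (fun ω => Drel E l t ω - ∫ ω', Drel E l t ω' ∂μ) μ :=
    (hD t).sub (integrable_const _)
  have hmean : Integrable
      (fun ω => 1 / ((T : ℝ) + 1) * ∑ s ∈ range (T + 1), Drel E l s ω) μ :=
    (integrable_finsetSum _ fun s _ => hD s).const_mul _
  have hvarying : Integrable (fun ω => Drel E l t ω - ∫ ω', Drel E l t ω' ∂μ
      - 1 / ((T : ℝ) + 1) * ∑ s ∈ range (T + 1), Drel E l s ω) μ := hcentered.sub hmean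
  simp only [ddotRel]
  rw [integral_add hvarying (integrable_const _),
    integral_sub hcentered hmean, integral_sub (hD t) (integrable_const _), integral_const_mul,
    integral_finsetSum _ fun s _ => hD s]
  simp

lemma sum_measureReal_mul_ddotCohort_eq_zero [IsProbabilityMeasure μ] (hE : Measurable E)
    {S : Finset ℕ} (hS : ∀ᵐ ω ∂μ, E ω ∈ S) (l : ℤ) (t : ℕ) :
    ∑ e ∈ S, μ.real {ω | E ω = e} * ddotCohort μ T E l t e = 0 := by
  have hconst : ∀ e, ∫ ω in {ω | E ω = e}, ddotRel μ T E l t ω ∂μ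
      = μ.real {ω | E ω = e} * ddotCohort μ T E l t e := fun e => by
    rw [setIntegral_congr_fun (measurableSet_fiber hE e)
      fun ω (hω : E ω = e) => by rw [ddotRel_eq_ddotCohort, hω], setIntegral_const, smul_eq_mul]
  simp_rw [← hconst]
  rw [← integral_eq_sum_setIntegral_fiber_s8 hE hS
    fun e _ => (integrable_ddotRel hE l t).integrableOn, integral_ddotRel_eq_zero hE]

end Demeaning

section PotentialOutcomes

variable {Ω : Type*} {T : ℕ} {E : Ω → ℕ} {Ye : ℕ → ℕ → Ω → ℝ} {Yinf : ℕ → Ω → ℝ} {e : ℕ}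

lemma obsY_eq_of_eq (he : e ∈ Icc 1 T) (t : ℕ) {ω : Ω} (hω : E ω = e) :
    obsY T E Ye Yinf t ω = Ye e t ω := by
  rw [obsY, sum_eq_single_of_mem e he fun b _ hb => by simp [hω, Ne.symm hb]]
  simp [hω]

variable [MeasurableSpace Ω] {μ : Measure Ω}

lemma setIntegral_baseline_eq_of_PT [IsFiniteMeasure μ] (hPT : PT μ T E Yinf) (he : e ∈ Icc 1 T)
    {s t : ℕ} (hs : s ≤ T) (ht : t ≤ T) (hYs : Integrable (Yinf s) μ)
    (hYt : Integrable (Yinf t) μ) :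
    ∫ ω in {ω | E ω = e}, Yinf t ω ∂μ = ∫ ω in {ω | E ω = e}, Yinf s ω ∂μ
      + μ.real {ω | E ω = e} * ((∫ ω, Yinf t ω ∂μ) - ∫ ω, Yinf s ω ∂μ) := by
  have h := cexp_mul_measureReal (μ := μ) (fun ω => Yinf t ω - Yinf s ω) {ω | E ω = e}
  rw [hPT e he s hs t ht, integral_sub hYt hYs,
    integral_sub hYt.integrableOn hYs.integrableOn] at h
  linarith

lemma setIntegral_sub_eq_zero_of_NA (hNA : NA μ T Ye Yinf) (he : e ∈ Icc 1 T) {t : ℕ}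
    (hte : t < e) : ∫ ω in {ω | E ω = e}, (Ye e t ω - Yinf t ω) ∂μ = 0 :=
  integral_eq_zero_of_ae <| ae_restrict_of_ae <| (hNA e he t hte).mono fun _ h => sub_eq_zero.mpr h

lemma CATT_mul_measureReal [IsFiniteMeasure μ] (e l' : ℕ) :
    CATT μ E Ye Yinf e l' * μ.real {ω | E ω = e}
      = ∫ ω in {ω | E ω = e}, (Ye e (e + l') ω - Yinf (e + l') ω) ∂μ := by
  rw [CATT, cexp_mul_measureReal, show ((e : ℤ) + l').toNat = e + l' by omega]

end PotentialOutcomes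

section Decomposition

variable {Ω : Type*} [MeasurableSpace Ω] {μ : Measure Ω} {T : ℕ} {E : Ω → ℕ}
  {Ye : ℕ → ℕ → Ω → ℝ} {Yinf : ℕ → Ω → ℝ} {L : Finset ℤ}

lemma cvec_apply_eq [IsFiniteMeasure μ] (hE : Measurable E) (l : {x // x ∈ L}) {e l' : ℕ}
    (hel' : e + l' ≤ T) :
    cvec μ T E L e l' l = ddotCohort μ T E l (e + l') e * μ.real {ω | E ω = e} := by
  have hterm : ∀ t, ∫ ω, ddotRel μ T E l t ω * ((if E ω = e then 1 else 0) * Drel E l' t ω) ∂μ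
      = if e + l' = t then ddotCohort μ T E l t e * μ.real {ω | E ω = e} else 0 := fun t => by
    have hind : (fun ω => ddotRel μ T E l t ω * ((if E ω = e then 1 else 0) * Drel E l' t ω))
        = {ω | E ω = e}.indicator fun _ => if e + l' = t then ddotCohort μ T E l t e else 0 := by
      ext ω
      by_cases hω : E ω = e
      · have hlag : (t : ℤ) - e = l' ↔ e + l' = t := by omega
        simp [hω, ddotRel_eq_ddotCohort, Drel, hlag]
      · simp [hω]
    rw [hind, integral_indicator_const _ (measurableSet_fiber hE e), smul_eq_mul]
    split_ifs <;> simp [mul_comm]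
  rw [cvec, sum_congr rfl fun t _ => hterm t, sum_ite_eq, if_pos (mem_range.mpr (by omega))]

lemma bvec_apply_eq_sum_sum (hE : Measurable E) (hS : ∀ᵐ ω ∂μ, E ω ∈ Icc 1 T)
    (hYe : ∀ e ∈ Icc 1 T, ∀ t ≤ T, Integrable (Ye e t) μ)
    (hYinf : ∀ t ≤ T, Integrable (Yinf t) μ) (l : {x // x ∈ L}) :
    bvec μ T E Ye Yinf L l = ∑ t ∈ range (T + 1), ∑ e ∈ Icc 1 T, ddotCohort μ T E l t e *
      ((∫ ω in {ω | E ω = e}, (Ye e t ω - Yinf t ω) ∂μ) + ∫ ω in {ω | E ω = e}, Yinf t ω ∂μ) := by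
  refine sum_congr rfl fun t ht => ?_
  replace ht : t ≤ T := Nat.lt_succ_iff.mp (mem_range.mp ht)
  have hcohort : ∀ e ∈ Icc 1 T, Set.EqOn (fun ω => ddotRel μ T E l t ω * obsY T E Ye Yinf t ω)
      (fun ω => ddotCohort μ T E l t e * Ye e t ω) {ω | E ω = e} := fun e he ω (hω : E ω = e) => by
    simp only [ddotRel_eq_ddotCohort, hω, obsY_eq_of_eq he t hω]
  rw [integral_eq_sum_setIntegral_fiber_s8 hE hS fun e he =>
    (((hYe e he t ht).const_mul _).integrableOn.congr_fun (hcohort e he).symm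
      (measurableSet_fiber hE e))]
  refine sum_congr rfl fun e he => ?_
  have heffect : IntegrableOn (fun ω => Ye e t ω - Yinf t ω) {ω | E ω = e} μ :=
    ((hYe e he t ht).sub (hYinf t ht)).integrableOn
  rw [setIntegral_congr_fun (measurableSet_fiber hE e) (hcohort e he), integral_const_mul,
    ← integral_add heffect (hYinf t ht).integrableOn]
  simp only [sub_add_cancel]

lemma sum_ddotCohort_mul_setIntegral_baseline_eq_zero [IsProbabilityMeasure μ]
    (hE : Measurable E) (hS : ∀ᵐ ω ∂μ, E ω ∈ Icc 1 T) (hPT : PT μ T E Yinf)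
    (hYinf : ∀ t ≤ T, Integrable (Yinf t) μ) (l : ℤ) :
    ∑ t ∈ range (T + 1), ∑ e ∈ Icc 1 T,
      ddotCohort μ T E l t e * ∫ ω in {ω | E ω = e}, Yinf t ω ∂μ = 0 := by
  have hsplit : ∀ t ∈ range (T + 1), ∀ e ∈ Icc 1 T,
      ddotCohort μ T E l t e * ∫ ω in {ω | E ω = e}, Yinf t ω ∂μ
        = ddotCohort μ T E l t e * ∫ ω in {ω | E ω = e}, Yinf 0 ω ∂μ
          + ((∫ ω, Yinf t ω ∂μ) - ∫ ω, Yinf 0 ω ∂μ)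
            * (μ.real {ω | E ω = e} * ddotCohort μ T E l t e) := fun t ht e he => by
    replace ht : t ≤ T := Nat.lt_succ_iff.mp (mem_range.mp ht)
    rw [setIntegral_baseline_eq_of_PT hPT he T.zero_le ht (hYinf 0 T.zero_le) (hYinf t ht)]
    ring
  rw [sum_congr rfl fun t ht => sum_congr rfl (hsplit t ht)]
  simp only [sum_add_distrib, ← mul_sum, sum_measureReal_mul_ddotCohort_eq_zero hE hS, mul_zero,
    add_zero]
  rw [sum_comm]
  simp only [← sum_mul, sum_ddotCohort_eq_zero, zero_mul, sum_const_zero]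

lemma sum_ddotCohort_mul_effect_eq_sum_CATT_mul_cvec [IsFiniteMeasure μ] (hE : Measurable E)
    (hNA : NA μ T Ye Yinf) {e : ℕ} (he : e ∈ Icc 1 T) (l : {x // x ∈ L}) :
    ∑ t ∈ range (T + 1),
        ddotCohort μ T E l t e * ∫ ω in {ω | E ω = e}, (Ye e t ω - Yinf t ω) ∂μ
      = ∑ l' ∈ range (T - e + 1), CATT μ E Ye Yinf e l' * cvec μ T E L e l' l := by
  have heT : e ≤ T := (mem_Icc.mp he).2
  rw [← sum_range_add_sum_Ico _ (by omega : e ≤ T + 1),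
    sum_eq_zero fun t ht => by
      rw [setIntegral_sub_eq_zero_of_NA hNA he (mem_range.mp ht), mul_zero],
    zero_add, sum_Ico_eq_sum_range, show T + 1 - e = T - e + 1 by omega]
  refine sum_congr rfl fun l' hl' => ?_
  rw [cvec_apply_eq hE l (by have := mem_range.mp hl'; omega), mul_left_comm, CATT_mul_measureReal]

end Decomposition

theorem dynamic_fe_numerator_decomposition_general
    {Ω : Type*} [MeasurableSpace Ω] (μ : Measure Ω) [IsProbabilityMeasure μ]
    (T : ℕ)
    (E : Ω → ℕ) (hE : Measurable E)
    (hsupp : μ {ω | 1 ≤ E ω ∧ E ω ≤ T} = 1)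
    (Ye : ℕ → ℕ → Ω → ℝ) (Yinf : ℕ → Ω → ℝ)
    (hL2e : ∀ e ∈ Finset.Icc 1 T, ∀ t ≤ T, MemLp (Ye e t) 2 μ)
    (hL2inf : ∀ t ≤ T, MemLp (Yinf t) 2 μ)
    (hPT : PT μ T E Yinf) (hNA : NA μ T Ye Yinf)
    (L : Finset ℤ) :
    ∀ l : {x // x ∈ L},
      bvec μ T E Ye Yinf L l
        = ∑ e ∈ Finset.Icc 1 T, ∑ l' ∈ Finset.range (T - e + 1),
            CATT μ E Ye Yinf e (l' : ℤ) * cvec μ T E L e (l' : ℤ) l := by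
  intro l
  have hsuppMeas : MeasurableSet {ω | 1 ≤ E ω ∧ E ω ≤ T} :=
    hE (MeasurableSet.of_discrete (s := {n : ℕ | 1 ≤ n ∧ n ≤ T}))
  have hS : ∀ᵐ ω ∂μ, E ω ∈ Icc 1 T :=
    ((ae_iff_measure_eq hsuppMeas.nullMeasurableSet).mpr
      (by rw [hsupp, measure_univ])).mono fun _ h => mem_Icc.mpr h
  have hYe : ∀ e ∈ Icc 1 T, ∀ t ≤ T, Integrable (Ye e t) μ :=
    fun e he t ht => (hL2e e he t ht).integrable one_le_two
  have hYinf : ∀ t ≤ T, Integrable (Yinf t) μ := fun t ht => (hL2inf t ht).integrable one_le_two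
  rw [bvec_apply_eq_sum_sum hE hS hYe hYinf l]
  simp only [mul_add, sum_add_distrib]
  rw [sum_ddotCohort_mul_setIntegral_baseline_eq_zero hE hS hPT hYinf, add_zero, sum_comm]
  exact sum_congr rfl fun e he => sum_ddotCohort_mul_effect_eq_sum_CATT_mul_cvec hE hNA he l

/-- Numerator decomposition in the proof of Proposition 2: under PT and NA,
`Σ_t E[D̈_t·Y_t] = Σ_{e=1}^{T} Σ_{l'=0}^{T−e} CATT(e,l')·c(e,l')` as vectors in `ℝ^L`. -/
theorem dynamic_fe_numerator_decomposition
    {Ω : Type*} [MeasurableSpace Ω] (μ : Measure Ω) [IsProbabilityMeasure μ]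
    (T : ℕ) (hT : 1 ≤ T)
    (E : Ω → ℕ) (hE : Measurable E)
    (hsupp : μ {ω | 1 ≤ E ω ∧ E ω ≤ T} = 1)
    (hpos : ∀ e ∈ Finset.Icc 1 T, 0 < μ {ω | E ω = e})
    (Ye : ℕ → ℕ → Ω → ℝ) (Yinf : ℕ → Ω → ℝ)
    (hL2e : ∀ e ∈ Finset.Icc 1 T, ∀ t ≤ T, MemLp (Ye e t) 2 μ)
    (hL2inf : ∀ t ≤ T, MemLp (Yinf t) 2 μ)
    (hPT : PT μ T E Yinf) (hNA : NA μ T Ye Yinf)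
    (L : Finset ℤ) (hL1 : L ⊆ Finset.Icc (-(T : ℤ)) ((T : ℤ) - 1))
    (hL2 : Finset.Icc (0 : ℤ) ((T : ℤ) - 1) ⊆ L) :
    ∀ l : {x // x ∈ L},
      bvec μ T E Ye Yinf L l
        = ∑ e ∈ Finset.Icc 1 T, ∑ l' ∈ Finset.range (T - e + 1),
            CATT μ E Ye Yinf e (l' : ℤ) * cvec μ T E L e (l' : ℤ) l :=
  dynamic_fe_numerator_decomposition_general μ T E hE hsupp Ye Yinf hL2e hL2inf hPT hNA L
end
end
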